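/- arXiv:1901.02570 — 2 statements merged into one kernel-verified Lean document; each statement's English description precedes it below -/
import Mathlib

section
/- Let V be a finite-dimensional real vector space, f : V → V a linear map, and δ₁, …, δ_m : V → ℝ linear functionals such that for each k there exist real numbers a_{ik} (1 ≤ i < k) with δ_k ∘ f = δ_k + Σ_{i<k} a_{ik} δ_i. Let Z = ker δ₁ ∩ … ∩ ker δ_m, which is f-invariant. Then Tr(f) = dim(V ⧸ Z) + Tr(f|_Z). -/
/-!
Splitting `V` along the invariant subspace `Z`, the trace of `f` is the trace of `f|_Z` plus the
trace of the map `f̄` induced on `V ⧸ Z`. The triangular relations say that `f - 1` pushes the flag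
`V ⊇ ker δ₁ ⊇ ker δ₁ ∩ ker δ₂ ⊇ ⋯ ⊇ Z` one step down, so `(f - 1) ^ m` maps `V` into `Z`. Hence
`f̄ - 1` is nilpotent and `Tr f̄ = Tr 1 = dim (V ⧸ Z)`.
-/

open Module Submodule

namespace LinearMap

theorem trace_eq_finrank_of_isNilpotent_sub_one {R M : Type*} [CommRing R] [IsReduced R]
    [AddCommGroup M] [Module R M] [Module.Free R M] [Module.Finite R M]
    {f : M →ₗ[R] M} (hf : IsNilpotent (f - 1)) :
    trace R M f = finrank R M := by
  rw [← sub_add_cancel f 1, map_add, (isNilpotent_trace_of_isNilpotent hf).eq_zero, zero_add,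
    trace_one]

variable {K V : Type*} [Field K] [AddCommGroup V] [Module K V] [FiniteDimensional K V]

theorem trace_eq_trace_restrict_add_trace_mapQ (p : Submodule K V) (f : V →ₗ[K] V)
    (hf : ∀ x ∈ p, f x ∈ p) :
    trace K V f = trace K p (f.restrict hf) + trace K (V ⧸ p) (p.mapQ p f hf) := by
  obtain ⟨q, hpq⟩ := p.exists_isCompl
  have hrestrict : p.projectionOnto q hpq ∘ₗ f ∘ₗ p.subtype = f.restrict hf := by
    ext x
    simp [projectionOnto_apply_of_mem_left hpq (hf x x.2)]
  have hmapQ : (p.quotientEquivOfIsCompl q hpq).symm.conj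
      (q.projectionOnto p hpq.symm ∘ₗ f ∘ₗ q.subtype) = p.mapQ p f hf := by
    have hmk (y : V) : p.mkQ (q.projection p hpq.symm y) = p.mkQ y :=
      mk_quotientEquivOfIsCompl_apply hpq (p.mkQ y)
    ext x
    exact (hmk _).trans (congrArg (p.mapQ p f hf) (hmk x))
  -- Cyclicity of the trace turns `f ∘ (projection onto p)` into the compression of `f` to `p`,
  -- and likewise for `q ≃ V ⧸ p`.
  calc trace K V f
      = trace K V ((f ∘ₗ p.subtype) ∘ₗ p.projectionOnto q hpq)
        + trace K V ((f ∘ₗ q.subtype) ∘ₗ q.projectionOnto p hpq.symm) := by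
        rw [← map_add, comp_assoc, comp_assoc, ← comp_add]
        change _ = trace K V (f ∘ₗ (p.projection q hpq + q.projection p hpq.symm))
        rw [projection_add_projection_eq_id, comp_id]
    _ = _ := by
      rw [trace_comp_comm', hrestrict, trace_comp_comm', ← hmapQ, trace_conj']

theorem isNilpotent_mapQ_sub_one {R M : Type*} [Ring R] [AddCommGroup M] [Module R M]
    {p : Submodule R M} {f : M →ₗ[R] M} (hf : ∀ x ∈ p, f x ∈ p) {n : ℕ}
    (hn : range ((f - 1) ^ n) ≤ p) :
    IsNilpotent (p.mapQ p f hf - 1) := by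
  have hf' : p ≤ p.comap (f - 1) := fun x hx => by simpa using sub_mem (hf x hx) hx
  have hsub : p.mapQ p f hf - 1 = p.mapQ p (f - 1) hf' := by
    ext; simp
  refine ⟨n, ?_⟩
  rw [hsub, ← mapQ_pow]
  ext x
  simpa [Quotient.mk_eq_zero] using hn (mem_range_self _ x)

theorem range_pow_le_iInf_ker_of_triangular {R M : Type*} [CommRing R] [AddCommGroup M]
    [Module R M] {m : ℕ} (δ : Fin m → M →ₗ[R] R) (g : M →ₗ[R] M)
    (hg : ∀ k, ∃ a : Fin m → R, (δ k).comp g = ∑ i ∈ Finset.univ.filter (· < k), a i • δ i) :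
    range (g ^ m) ≤ ⨅ i, ker (δ i) := by
  have hvanish (n : ℕ) (x : M) (k : Fin m) (hk : (k : ℕ) < n) : δ k ((g ^ n) x) = 0 := by
    induction n generalizing k with
    | zero => exact absurd hk k.val.not_lt_zero
    | succ n ih =>
      obtain ⟨a, ha⟩ := hg k
      rw [pow_succ', Module.End.mul_apply, ← comp_apply, ha]
      simp only [sum_apply, smul_apply, smul_eq_mul]
      refine Finset.sum_eq_zero fun i hi => ?_
      rw [ih i (by have := (Finset.mem_filter.mp hi).2; omega), mul_zero]
  rintro _ ⟨x, rfl⟩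
  exact mem_iInf _ |>.mpr fun k => hvanish m x k k.isLt

end LinearMap

open LinearMap in
/-- Under the triangular relations `δ_k ∘ f = δ_k + Σ_{i<k} a_{ik} δ_i`, the
subspace `Z = ker δ₁ ∩ … ∩ ker δ_m` is `f`-invariant and
`Tr(f) = dim(V ⧸ Z) + Tr(f|_Z)`. -/
theorem trace_eq_finrank_quotient_add_trace_restrict
    {V : Type*} [AddCommGroup V] [Module ℝ V] [FiniteDimensional ℝ V]
    (f : V →ₗ[ℝ] V) {m : ℕ} (δ : Fin m → V →ₗ[ℝ] ℝ)
    (htri : ∀ k : Fin m, ∃ a : Fin m → ℝ,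
      (δ k).comp f = δ k + ∑ i ∈ Finset.univ.filter (fun i => i < k), a i • δ i)
    (hZ : ∀ x ∈ ⨅ i : Fin m, LinearMap.ker (δ i),
      f x ∈ ⨅ i : Fin m, LinearMap.ker (δ i)) :
    LinearMap.trace ℝ V f
      = (Module.finrank ℝ (V ⧸ ⨅ i : Fin m, LinearMap.ker (δ i)) : ℝ)
        + LinearMap.trace ℝ (⨅ i : Fin m, LinearMap.ker (δ i) : Submodule ℝ V)
            (f.restrict hZ) := by
  have hunip (k : Fin m) : ∃ a : Fin m → ℝ,
      (δ k).comp (f - 1) = ∑ i ∈ Finset.univ.filter (· < k), a i • δ i :=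
    (htri k).imp fun a ha => by
      rw [comp_sub, ha, Module.End.one_eq_id, comp_id, add_sub_cancel_left]
  rw [trace_eq_trace_restrict_add_trace_mapQ _ f hZ, add_comm,
    trace_eq_finrank_of_isNilpotent_sub_one
      (isNilpotent_mapQ_sub_one hZ (range_pow_le_iInf_ker_of_triangular δ _ hunip))]
end

section
/- Let V be a finite-dimensional real vector space, f : V → V a linear map, B' ⊆ V an f-invariant subspace, and b ∈ V a vector with f(b) − b ∈ B'. Let B = B' + span{b}. Then B is f-invariant, and the traces of the induced maps on the quotients satisfy Tr(f̄ on V ⧸ B') − Tr(f̄ on V ⧸ B) = 1 if b ∉ B', and = 0 if b ∈ B'. -/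
open Submodule LinearMap

/-- Auxiliary lemma: if `g w = w` and `span {w}` is `g`-invariant, then
`trace g = trace (induced map on the quotient) + finrank (span {w})`. -/
lemma trace_eq_trace_quotient_add_finrank
    {W : Type*} [AddCommGroup W] [Module ℝ W] [FiniteDimensional ℝ W]
    (g : W →ₗ[ℝ] W) (w : W) (hw : g w = w)
    (hS : Submodule.span ℝ {w} ≤ (Submodule.span ℝ {w}).comap g) :
    LinearMap.trace ℝ W g
      = LinearMap.trace ℝ (W ⧸ Submodule.span ℝ ({w} : Set W))
          (Submodule.mapQ _ _ g hS)
        + (Module.finrank ℝ (Submodule.span ℝ ({w} : Set W)) : ℝ) := by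
  set S := Submodule.span ℝ ({w} : Set W) with hSdef
  set π := S.mkQ with hπ
  obtain ⟨s, hs⟩ := π.exists_rightInverse_of_surjective
    (by rw [Submodule.range_mkQ])
  set Q := Submodule.mapQ S S g hS with hQ
  set h : W →ₗ[ℝ] W := s ∘ₗ (Q ∘ₗ π) with hh
  have htraceh : LinearMap.trace ℝ W h = LinearMap.trace ℝ (W ⧸ S) Q := by
    rw [hh, LinearMap.trace_comp_comm', LinearMap.comp_assoc s π Q, hs, LinearMap.comp_id]
  set d : W →ₗ[ℝ] W := g - h with hd
  have hπg : ∀ x : W, π (g x) = Q (π x) := by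
    intro x
    simp [hQ, hπ, Submodule.mapQ_apply]
  have hproj : LinearMap.IsProj S d := by
    constructor
    · intro x
      have : π (d x) = 0 := by
        have hsx : π (s (Q (π x))) = Q (π x) := by
          have := congrArg (fun m => m (Q (π x))) hs
          simpa using this
        simp [hd, hh, hπg x, hsx]
      rwa [← LinearMap.mem_ker, Submodule.ker_mkQ] at this
    · intro x hx
      obtain ⟨c, rfl⟩ := Submodule.mem_span_singleton.mp hx
      have hπw : π w = 0 := by
        rw [← LinearMap.mem_ker, Submodule.ker_mkQ]
        exact Submodule.mem_span_singleton_self w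
      simp [hd, hh, hπw, map_smul, hw]
  have htraced : LinearMap.trace ℝ W d = (Module.finrank ℝ S : ℝ) := hproj.trace
  have : LinearMap.trace ℝ W g = LinearMap.trace ℝ W h + LinearMap.trace ℝ W d := by
    rw [← map_add]
    congr 1
    rw [hd]
    abel
  rw [this, htraceh, htraced]

/-- If `B'` is `f`-invariant and `f b − b ∈ B'`, then `B = B' + span{b}` is
`f`-invariant, and the traces of the induced maps on the quotients satisfy
`Tr(f̄ on V ⧸ B') − Tr(f̄ on V ⧸ B) = 1` if `b ∉ B'` and `= 0` if `b ∈ B'`. -/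
theorem trace_quotient_sub_trace_quotient_sup_span
    {V : Type*} [AddCommGroup V] [Module ℝ V] [FiniteDimensional ℝ V]
    (f : V →ₗ[ℝ] V) (B' : Submodule ℝ V) (hB' : B' ≤ B'.comap f)
    (b : V) (hb : f b - b ∈ B') :
    ∃ hB : B' ⊔ Submodule.span ℝ {b} ≤ (B' ⊔ Submodule.span ℝ {b}).comap f,
      ((b ∉ B' →
        LinearMap.trace ℝ (V ⧸ B') (Submodule.mapQ _ _ f hB')
          - LinearMap.trace ℝ (V ⧸ (B' ⊔ Submodule.span ℝ ({b} : Set V)))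
              (Submodule.mapQ _ _ f hB) = 1) ∧
       (b ∈ B' →
        LinearMap.trace ℝ (V ⧸ B') (Submodule.mapQ _ _ f hB')
          - LinearMap.trace ℝ (V ⧸ (B' ⊔ Submodule.span ℝ ({b} : Set V)))
              (Submodule.mapQ _ _ f hB) = 0)) := by
  set B := B' ⊔ Submodule.span ℝ ({b} : Set V) with hBdef
  have hbB : b ∈ B := Submodule.mem_sup_right (Submodule.mem_span_singleton_self b)
  have hfb : f b ∈ B := by
    have : f b = (f b - b) + b := by abel
    rw [this]
    exact B.add_mem (Submodule.mem_sup_left hb) hbB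
  have hB : B ≤ B.comap f := by
    rw [hBdef]
    refine sup_le (le_trans hB' ?_) ?_
    · exact Submodule.comap_mono le_sup_left
    · rw [Submodule.span_le]
      intro x hx
      rw [Set.mem_singleton_iff] at hx
      subst hx
      exact hfb
  refine ⟨hB, ?_⟩
  -- setup: work in W = V ⧸ B'
  set g := Submodule.mapQ B' B' f hB' with hg
  set w : V ⧸ B' := Submodule.Quotient.mk b with hwdef
  have hgw : g w = w := by
    rw [hg, hwdef, Submodule.mapQ_apply]
    rw [Submodule.Quotient.eq]
    exact hb
  have hS : Submodule.span ℝ ({w} : Set (V ⧸ B'))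
      ≤ (Submodule.span ℝ ({w} : Set (V ⧸ B'))).comap g := by
    have hmem : w ∈ (Submodule.span ℝ ({w} : Set (V ⧸ B'))).comap g := by
      rw [Submodule.mem_comap, hgw]
      exact Submodule.mem_span_singleton_self w
    exact Submodule.span_le.mpr (Set.singleton_subset_iff.mpr hmem)
  -- B maps to (Submodule.span ℝ ({w} : Set (V ⧸ B'))) under the quotient map
  have hle : B' ≤ B := le_sup_left
  have hmap : B.map B'.mkQ = (Submodule.span ℝ ({w} : Set (V ⧸ B'))) := by
    rw [hBdef, Submodule.map_sup, Submodule.mkQ_map_self, bot_sup_eq, Submodule.map_span]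
    congr 1
    simp [hwdef]
  -- the equivalence (V⧸B')⧸(Submodule.span ℝ ({w} : Set (V ⧸ B'))) ≃ V⧸B
  set e : ((V ⧸ B') ⧸ (Submodule.span ℝ ({w} : Set (V ⧸ B')))) ≃ₗ[ℝ] V ⧸ B :=
    (Submodule.quotEquivOfEq (Submodule.span ℝ ({w} : Set (V ⧸ B'))) (B.map B'.mkQ) hmap.symm).trans
      (Submodule.quotientQuotientEquivQuotient B' B hle) with he
  have hemk : ∀ x : V,
      e (Submodule.Quotient.mk (Submodule.Quotient.mk x)) = Submodule.Quotient.mk x := by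
    intro x
    simp [he, Submodule.quotEquivOfEq_mk, Submodule.quotientQuotientEquivQuotient]
  -- conjugation compatibility
  have hconj : e.conj (Submodule.mapQ (Submodule.span ℝ ({w} : Set (V ⧸ B'))) (Submodule.span ℝ ({w} : Set (V ⧸ B'))) g hS) = Submodule.mapQ B B f hB := by
    apply Submodule.linearMap_qext
    ext x
    have h1 : e.symm (Submodule.Quotient.mk x)
        = Submodule.Quotient.mk (Submodule.Quotient.mk x) := by
      rw [LinearEquiv.symm_apply_eq, hemk]
    simp only [LinearMap.comp_apply, Submodule.mkQ_apply, LinearEquiv.conj_apply,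
      LinearMap.comp_apply, LinearEquiv.coe_coe, h1, Submodule.mapQ_apply, hg]
    exact hemk (f x)
  have htr : LinearMap.trace ℝ (V ⧸ B) (Submodule.mapQ B B f hB)
      = LinearMap.trace ℝ ((V ⧸ B') ⧸ (Submodule.span ℝ ({w} : Set (V ⧸ B')))) (Submodule.mapQ (Submodule.span ℝ ({w} : Set (V ⧸ B'))) (Submodule.span ℝ ({w} : Set (V ⧸ B'))) g hS) := by
    rw [← hconj, LinearMap.trace_conj']
  have key := trace_eq_trace_quotient_add_finrank g w hgw hS
  constructor
  · intro hbnot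
    have hwne : w ≠ 0 := by
      rw [hwdef, Ne, Submodule.Quotient.mk_eq_zero]
      exact hbnot
    have hrank : Module.finrank ℝ (Submodule.span ℝ ({w} : Set (V ⧸ B'))) = 1 := by
      exact finrank_span_singleton hwne
    rw [htr, key, hrank]
    push_cast
    ring
  · intro hbmem
    have hw0 : w = 0 := by
      rw [hwdef, Submodule.Quotient.mk_eq_zero]
      exact hbmem
    have hrank : Module.finrank ℝ (Submodule.span ℝ ({w} : Set (V ⧸ B'))) = 0 := by
      rw [hw0, Submodule.span_zero_singleton]
      exact finrank_bot ℝ _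
    rw [htr, key, hrank]
    push_cast
    ring
end
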